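/- arXiv:1908.05326 — 3 statements merged into one kernel-verified Lean document; each statement's English description precedes it below -/
import Mathlib

section
/- Let X be a Hilbert C*-module over a C*-algebra A, let x, y, e ∈ X with ⟨e,e⟩ an idempotent in A, and let α, β, λ, μ be complex numbers such that ‖x − ((α+β)/2)e‖ ≤ (1/2)|α−β| and ‖y − ((λ+μ)/2)e‖ ≤ (1/2)|λ−μ|. Then ‖⟨x,y⟩ − ⟨x,e⟩⟨e,y⟩‖ ≤ (1/4)|α−β||λ−μ|. -/
/-!
Since `⟨e, e⟩` is idempotent, `e ⟨e, e⟩ = e`, and `z ↦ z - e ⟨e, z⟩` is the orthogonal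
projection onto the complement of `e A`. It turns `⟨x, y⟩ - ⟨x, e⟩ ⟨e, y⟩` into the inner
product of the projections of `x` and `y`, and by Pythagoras `‖z - e ⟨e, z⟩‖ ≤ ‖z - c e‖` for
every `c : ℂ`. Cauchy–Schwarz then gives the bound.
-/

section StarAlgebraMap

variable {A : Type*}

lemma star_algebraMap_ofReal [NormedRing A] [StarRing A] [ContinuousStar A] [NormedAlgebra ℂ A]
    (r : ℝ) : star (algebraMap ℂ A r) = algebraMap ℂ A r := by
  let f : ℝ →+ A :=
    { toFun := fun r => star (algebraMap ℂ A r)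
      map_zero' := by simp
      map_add' := fun a b => by simp }
  have hf : Continuous f :=
    continuous_star.comp ((continuous_algebraMap ℂ A).comp Complex.continuous_ofReal)
  simpa [f, Algebra.algebraMap_eq_smul_one, ← Complex.coe_smul] using map_real_smul f hf r 1

/-- With `v = i` and `w = star v`, the element `2 (1 - v w)` equals both `(1 - v w)²` and
`-(v + w)²`, so it is zero. -/
lemma star_algebraMap_I [Ring A] [StarRing A] [Algebra ℂ A] [PartialOrder A]
    [StarOrderedRing A] : star (algebraMap ℂ A Complex.I) = -algebraMap ℂ A Complex.I := by
  set v := algebraMap ℂ A Complex.I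
  set w := star v
  have hv : v * v = -1 := by rw [← map_mul, Complex.I_mul_I, map_neg, map_one]
  have hw : w * w = -1 := by rw [← star_mul, hv, star_neg, star_one]
  have hwv : w * v = v * w := (Algebra.commutes Complex.I w).symm
  have hsq : (1 - v * w) * (1 - v * w) = (1 - v * w) + (1 - v * w) := by
    have hk : v * w * (v * w) = 1 := by
      rw [mul_assoc, ← mul_assoc w, hwv, mul_assoc, hw, ← mul_assoc, hv, neg_mul_neg, one_mul]
    rw [sub_mul, mul_sub, mul_sub, hk, one_mul, one_mul, mul_one]; abel
  have hsum : (v + w) * (v + w) = -((1 - v * w) + (1 - v * w)) := by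
    rw [add_mul, mul_add, mul_add, hv, hw, hwv]; abel
  have hvw_sa : IsSelfAdjoint (1 - v * w) := by
    simp [IsSelfAdjoint, w]
  have hsa : IsSelfAdjoint (v + w) := by
    simp [IsSelfAdjoint, w, add_comm]
  have h0 : (1 - v * w) + (1 - v * w) = 0 :=
    le_antisymm (neg_nonneg.mp (hsum ▸ hsa.mul_self_nonneg)) (hsq ▸ hvw_sa.mul_self_nonneg)
  have h1 : v * w = 1 := by
    have : (2 : ℂ) • (1 - v * w) = 0 := by rw [two_smul, h0]
    exact (sub_eq_zero.mp ((smul_eq_zero.mp this).resolve_left two_ne_zero)).symm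
  calc w = -(v * v) * w := by rw [hv, neg_neg, one_mul]
    _ = -v := by rw [neg_mul, mul_assoc, h1, mul_one]

end StarAlgebraMap

section StarModule

variable (A : Type*) [NormedRing A] [StarRing A] [ContinuousStar A] [NormedAlgebra ℂ A]
  [PartialOrder A] [StarOrderedRing A]

lemma starModule_complex_of_starOrderedRing : StarModule ℂ A where
  star_smul c a := by
    have hc : star (algebraMap ℂ A c) = algebraMap ℂ A (star c) := by
      conv_lhs => rw [← Complex.re_add_im c]
      rw [map_add, map_mul, star_add, star_mul, star_algebraMap_I, star_algebraMap_ofReal,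
        star_algebraMap_ofReal, neg_mul, ← map_mul, ← map_neg, ← map_add]
      congr 1
      simp [Complex.ext_iff]
    rw [Algebra.smul_def, star_mul, hc, ← Algebra.commutes, ← Algebra.smul_def]

noncomputable abbrev CStarAlgebra.ofStarOrderedRing [CStarRing A] [CompleteSpace A] :
    CStarAlgebra A :=
  { ‹NormedRing A›, ‹StarRing A›, ‹CStarRing A›, ‹NormedAlgebra ℂ A›, ‹CompleteSpace A›,
    starModule_complex_of_starOrderedRing A with }

end StarModule

namespace CStarModule

variable {A E : Type*} [NonUnitalCStarAlgebra A] [PartialOrder A]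
  [AddCommGroup E] [Module ℂ E] [SMul A E] [Norm E] [CStarModule A E]

local notation "⟪" x ", " y "⟫" => inner A x y

lemma norm_le_norm_add_of_inner_eq_zero [StarOrderedRing A] {u v : E} (h : ⟪u, v⟫ = 0) :
    ‖u‖ ≤ ‖u + v‖ := by
  have hvu : ⟪v, u⟫ = 0 := by rw [← star_inner, h, star_zero]
  have hle : ⟪u, u⟫ ≤ ⟪u + v, u + v⟫ := by
    simpa [h, hvu] using le_add_of_nonneg_right (a := ⟪u, u⟫) inner_self_nonneg
  rw [norm_eq_sqrt_norm_inner_self (A := A) u, norm_eq_sqrt_norm_inner_self (A := A) (u + v)]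
  exact Real.sqrt_le_sqrt (CStarAlgebra.norm_le_norm_of_nonneg_of_le inner_self_nonneg hle)

section IsIdempotentElem

variable {e : E} (he : IsIdempotentElem (inner A e e))
include he

lemma inner_self_smul_self_of_isIdempotentElem : ⟪e, e⟫ • e = e := by
  have hright : ⟪e, ⟪e, e⟫ • e - e⟫ = 0 := by simp [he.eq]
  have hleft : ⟪⟪e, e⟫ • e - e, e⟫ = 0 := by rw [← star_inner, hright, star_zero]
  refine sub_eq_zero.mp ((inner_self (A := A)).mp ?_)
  simp [hleft]

lemma inner_self_mul_inner_of_isIdempotentElem (z : E) : ⟪e, e⟫ * ⟪z, e⟫ = ⟪z, e⟫ := by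
  rw [← inner_op_smul_right, inner_self_smul_self_of_isIdempotentElem he]

lemma inner_sub_inner_smul_self_of_isIdempotentElem (z : E) : ⟪z - ⟪e, z⟫ • e, e⟫ = 0 := by
  simp [inner_self_mul_inner_of_isIdempotentElem he]

lemma inner_sub_inner_smul_sub_inner_smul_of_isIdempotentElem (x y : E) :
    ⟪x - ⟪e, x⟫ • e, y - ⟪e, y⟫ • e⟫ = ⟪x, y⟫ - ⟪e, y⟫ * ⟪x, e⟫ := by
  simp [inner_sub_inner_smul_self_of_isIdempotentElem he]

variable [StarOrderedRing A]

lemma norm_sub_inner_smul_le_of_isIdempotentElem (z : E) (c : ℂ) :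
    ‖z - ⟪e, z⟫ • e‖ ≤ ‖z - c • e‖ := by
  have horth : ⟪z - ⟪e, z⟫ • e, ⟪e, z⟫ • e - c • e⟫ = 0 := by
    simp [inner_sub_inner_smul_self_of_isIdempotentElem he]
  simpa using norm_le_norm_add_of_inner_eq_zero horth

theorem norm_inner_sub_inner_mul_inner_le_of_isIdempotentElem (x y : E) (a b : ℂ) :
    ‖⟪x, y⟫ - ⟪e, y⟫ * ⟪x, e⟫‖ ≤ ‖x - a • e‖ * ‖y - b • e‖ := by
  rw [← inner_sub_inner_smul_sub_inner_smul_of_isIdempotentElem he]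
  exact (norm_inner_le E).trans <| mul_le_mul
    (norm_sub_inner_smul_le_of_isIdempotentElem he x a)
    (norm_sub_inner_smul_le_of_isIdempotentElem he y b)
    (CStarModule.norm_nonneg A) (CStarModule.norm_nonneg A)

end IsIdempotentElem

end CStarModule

theorem stmt_2_general {A : Type*} [NormedRing A] [StarRing A] [CStarRing A] [PartialOrder A]
    [StarOrderedRing A] [NormedAlgebra ℂ A] [CompleteSpace A]
    {X : Type*} [NormedAddCommGroup X] [NormedSpace ℂ X]
    (smul : X → A → X)
    (ip : X → X → A)
    (h_add : ∀ x y z : X, ip x (y + z) = ip x y + ip x z)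
    (h_smul : ∀ (x y : X) (a : A), ip x (smul y a) = ip x y * a)
    (h_csmul : ∀ (c : ℂ) (x y : X), ip x (c • y) = c • ip x y)
    (h_star : ∀ x y : X, star (ip x y) = ip y x)
    (h_pos : ∀ x : X, 0 ≤ ip x x)
    (h_def : ∀ x : X, ip x x = 0 → x = 0)
    (h_norm : ∀ x : X, ‖x‖ = Real.sqrt ‖ip x x‖)
    (x y e : X) (h_idem : ip e e * ip e e = ip e e)
    (α β lam μ : ℂ)
    (hx : ‖x - ((α + β) / 2) • e‖ ≤ (1 / 2) * ‖α - β‖)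
    (hy : ‖y - ((lam + μ) / 2) • e‖ ≤ (1 / 2) * ‖lam - μ‖) :
    ‖ip x y - ip x e * ip e y‖ ≤ (1 / 4) * ‖α - β‖ * ‖lam - μ‖ := by
  let := CStarAlgebra.ofStarOrderedRing A
  -- `CStarModule` is stated for left actions; a right `A`-module is a left `Aᵐᵒᵖ`-module.
  let : SMul Aᵐᵒᵖ X := ⟨fun a z => smul z a.unop⟩
  let : CStarModule Aᵐᵒᵖ X :=
    { inner z w := MulOpposite.op (ip z w)
      inner_add_right := congrArg MulOpposite.op (h_add _ _ _)
      inner_self_nonneg := h_pos _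
      inner_self := ⟨fun h => h_def _ (congrArg MulOpposite.unop h), by
        rintro rfl
        simpa using congrArg MulOpposite.op (h_add 0 0 0)⟩
      inner_op_smul_right := congrArg MulOpposite.op (h_smul _ _ _)
      inner_smul_right_complex := congrArg MulOpposite.op (h_csmul _ _ _)
      star_inner z w := congrArg MulOpposite.op (h_star z w)
      norm_eq_sqrt_norm_inner_self := h_norm }
  have he : IsIdempotentElem (inner Aᵐᵒᵖ e e) := congrArg MulOpposite.op h_idem
  calc ‖ip x y - ip x e * ip e y‖
      ≤ ‖x - ((α + β) / 2) • e‖ * ‖y - ((lam + μ) / 2) • e‖ :=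
        CStarModule.norm_inner_sub_inner_mul_inner_le_of_isIdempotentElem
          (A := Aᵐᵒᵖ) he x y _ _
    _ ≤ (1 / 2 * ‖α - β‖) * (1 / 2 * ‖lam - μ‖) :=
        mul_le_mul hx hy (norm_nonneg _) (by positivity)
    _ = 1 / 4 * ‖α - β‖ * ‖lam - μ‖ := by ring

/-- Grüss type inequality in a Hilbert C*-module (Theorem 2 of the paper):
if ⟨e,e⟩ is an idempotent and x, y satisfy the two displayed conditions, then
‖⟨x,y⟩ − ⟨x,e⟩⟨e,y⟩‖ ≤ (1/4)|α−β||λ−μ|. -/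
theorem stmt_2 {A : Type*} [NormedRing A] [StarRing A] [CStarRing A] [PartialOrder A]
    [StarOrderedRing A] [NormedAlgebra ℂ A] [CompleteSpace A]
    {X : Type*} [NormedAddCommGroup X] [NormedSpace ℂ X] [CompleteSpace X]
    (smul : X → A → X)
    (ip : X → X → A)
    (h_add : ∀ x y z : X, ip x (y + z) = ip x y + ip x z)
    (h_smul : ∀ (x y : X) (a : A), ip x (smul y a) = ip x y * a)
    (h_csmul : ∀ (c : ℂ) (x y : X), ip x (c • y) = c • ip x y)
    (h_star : ∀ x y : X, star (ip x y) = ip y x)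
    (h_pos : ∀ x : X, 0 ≤ ip x x)
    (h_def : ∀ x : X, ip x x = 0 → x = 0)
    (h_norm : ∀ x : X, ‖x‖ = Real.sqrt ‖ip x x‖)
    (x y e : X) (h_idem : ip e e * ip e e = ip e e)
    (α β lam μ : ℂ)
    (hx : ‖x - ((α + β) / 2) • e‖ ≤ (1 / 2) * ‖α - β‖)
    (hy : ‖y - ((lam + μ) / 2) • e‖ ≤ (1 / 2) * ‖lam - μ‖) :
    ‖ip x y - ip x e * ip e y‖ ≤ (1 / 4) * ‖α - β‖ * ‖lam - μ‖ :=
  stmt_2_general smul ip h_add h_smul h_csmul h_star h_pos h_def h_norm x y e h_idem α β lam μ hx hy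
end

section
/- Let X be a semi-inner product C*-module over a C*-algebra A, x₀, y₀ ∈ X, p ∈ A, and f = (f₁,…,fₙ) : A → Xⁿ Fréchet differentiable at p with ‖Df(p) − \widehat{(x₀+y₀)/2}‖ ≤ ‖(x₀−y₀)/2‖. Then for all a ∈ A: ‖Σ_{k=1}^{n} k²·Df_k(p)(a) − ((n+1)(2n+1)/6)·Σ_{k=1}^{n} Df_k(p)(a)‖ ≤ (‖a‖‖x₀−y₀‖n/(12√5))·√((n−1)(n+1)(2n+1)(8n+11)). -/
section StarMod
variable {A : Type*} [NormedRing A] [StarRing A] [CStarRing A] [PartialOrder A]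
    [StarOrderedRing A] [NormedAlgebra ℂ A]

omit [PartialOrder A] [StarOrderedRing A] in
lemma aux_star_real_smul (r : ℝ) (y : A) : star (r • y) = r • star y :=
  map_real_smul (starAddEquiv : A ≃+ A) continuous_star r y

lemma aux_star_I_one : star ((Complex.I : ℂ) • (1 : A)) = -(Complex.I • (1 : A)) := by
  set u : A := Complex.I • (1 : A) with hu
  have hu2 : u * u = -1 := by
    rw [hu, smul_mul_smul_comm, Complex.I_mul_I, one_mul, neg_smul, one_smul]
  have hucomm : ∀ x : A, u * x = x * u := fun x => by
    rw [hu, smul_mul_assoc, one_mul, mul_smul_comm, mul_one]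
  have hscomm : ∀ x : A, star u * x = x * star u := fun x => by
    have h := congrArg star (hucomm (star x))
    rw [star_mul, star_mul, star_star] at h
    exact h.symm
  have hs2 : star u * star u = -1 := by rw [← star_mul, hu2, star_neg, star_one]
  set v : A := u * star u with hv
  have hvstar : star v = v := by rw [hv, star_mul, star_star]
  have hvv : v * v = 1 := by
    have hsu : star u * u = u * star u := (hucomm (star u)).symm
    calc v * v = u * ((star u * u) * star u) := by
          rw [hv]; simp only [mul_assoc]
      _ = (u * u) * (star u * star u) := by rw [hsu]; simp only [mul_assoc]
      _ = 1 := by rw [hu2, hs2]; norm_num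
  set q : A := (2⁻¹ : ℝ) • (1 - v) with hq
  have hqstar : star q = q := by rw [hq, aux_star_real_smul, star_sub, star_one, hvstar]
  have hqq : q * q = q := by
    rw [hq, smul_mul_smul_comm]
    have h12 : (1 - v) * (1 - v) = (2 : ℝ) • (1 - v) := by
      have h11 : (1 - v) * (1 - v) = 1 - v - v + v * v := by noncomm_ring
      rw [h11, hvv]; module
    rw [h12, smul_smul]; norm_num
  have hq0 : 0 ≤ q := by
    have h := star_mul_self_nonneg q
    rwa [hqstar, hqq] at h
  have hvq : v * q = -q := by
    rw [hq, mul_smul_comm]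
    have h13 : v * (1 - v) = -(1 - v) := by rw [mul_sub, mul_one, hvv]; abel
    rw [h13, smul_neg]
  have hnq0 : 0 ≤ -q := by
    have h := star_mul_self_nonneg (u * q)
    have hcalc : star (u * q) * (u * q) = -q := by
      rw [star_mul, hqstar]
      calc q * star u * (u * q)
          = q * (star u * u * q) := by simp only [mul_assoc]
        _ = q * (u * star u * q) := by rw [← hucomm (star u)]
        _ = q * (v * q) := by rw [← hv]
        _ = q * (-q) := by rw [hvq]
        _ = -q := by rw [mul_neg, hqq]
    rwa [hcalc] at h
  have hqz : q = 0 := le_antisymm (neg_nonneg.mp hnq0) hq0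
  rw [hq] at hqz
  have h1 : (1 : A) - v = 0 := (smul_eq_zero.mp hqz).resolve_left (by norm_num)
  rw [sub_eq_zero] at h1
  have huv : u * star u = 1 := by rw [← hv, ← h1]
  have h2 : u * (u * star u) = u := by rw [huv, mul_one]
  rw [← mul_assoc, hu2, neg_one_mul, neg_eq_iff_eq_neg] at h2
  exact h2

lemma aux_starModule : StarModule ℂ A := by
  constructor
  intro z x
  have hsI : ∀ y : A, star (Complex.I • y) = -(Complex.I • star y) := fun y => by
    rw [show Complex.I • y = (Complex.I • (1 : A)) * y by rw [smul_mul_assoc, one_mul],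
      star_mul, aux_star_I_one, mul_neg, mul_smul_comm, mul_one]
  have hz : z = ((z.re : ℝ) : ℂ) + ((z.im : ℝ) : ℂ) * Complex.I := (Complex.re_add_im z).symm
  have hsz : star z = ((z.re : ℝ) : ℂ) + ((-z.im : ℝ) : ℂ) * Complex.I := by
    simp [Complex.ext_iff]
  calc star (z • x) = star ((((z.re : ℝ) : ℂ) + ((z.im : ℝ) : ℂ) * Complex.I) • x) := by
        rw [← hz]
    _ = star ((z.re : ℝ) • x + (z.im : ℝ) • (Complex.I • x)) := by
        rw [add_smul, mul_smul, Complex.coe_smul, Complex.coe_smul]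
    _ = z.re • star x + z.im • star (Complex.I • x) := by
        rw [star_add, aux_star_real_smul, aux_star_real_smul]
    _ = z.re • star x + (-z.im) • (Complex.I • star x) := by
        rw [hsI, smul_neg, neg_smul]
    _ = star z • star x := by
        rw [hsz, add_smul, mul_smul, Complex.coe_smul, Complex.coe_smul]

end StarMod

lemma aux_norm_mono {A : Type*} [NormedRing A] [StarRing A] [CStarRing A] [PartialOrder A]
    [StarOrderedRing A] [NormedAlgebra ℂ A] [CompleteSpace A]
    {a b : A} (ha : 0 ≤ a) (hab : a ≤ b) : ‖a‖ ≤ ‖b‖ := by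
  letI : StarModule ℂ A := aux_starModule
  letI : CStarAlgebra A :=
    { ‹NormedRing A›, ‹StarRing A›, ‹CStarRing A›, ‹CompleteSpace A›,
      (inferInstance : NormedAlgebra ℂ A), (inferInstance : StarModule ℂ A) with }
  exact CStarAlgebra.norm_le_norm_of_nonneg_of_le ha hab

lemma aux_sumsq (n : ℕ) : ∑ k : Fin n, ((k : ℝ) + 1) ^ 2
    = (n : ℝ) * ((n : ℝ) + 1) * (2 * (n : ℝ) + 1) / 6 := by
  rw [Fin.sum_univ_eq_sum_range (fun k => ((k : ℝ) + 1) ^ 2)]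
  induction n with
  | zero => simp
  | succ m ih => rw [Finset.sum_range_succ, ih]; push_cast; ring

lemma aux_sum4 (n : ℕ) : ∑ k : Fin n, (((k : ℝ) + 1) ^ 2) ^ 2
    = (n : ℝ) * ((n : ℝ) + 1) * (2 * (n : ℝ) + 1) * (3 * (n : ℝ) ^ 2 + 3 * (n : ℝ) - 1) / 30 := by
  rw [Fin.sum_univ_eq_sum_range (fun k => (((k : ℝ) + 1) ^ 2) ^ 2)]
  induction n with
  | zero => simp
  | succ m ih => rw [Finset.sum_range_succ, ih]; push_cast; ring

/-- Special case rᵢ = 1/n, αₖ = k² of the weighted Grüss inequality: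
‖Σₖ k²·Df_k(p)(a) − ((n+1)(2n+1)/6)·Σₖ Df_k(p)(a)‖
  ≤ (‖a‖‖x₀−y₀‖n/(12√5))·√((n−1)(n+1)(2n+1)(8n+11)). -/
theorem stmt_11 {A : Type*} [NormedRing A] [StarRing A] [CStarRing A] [PartialOrder A]
    [StarOrderedRing A] [NormedAlgebra ℂ A] [CompleteSpace A]
    {X : Type*} [NormedAddCommGroup X] [NormedSpace ℝ X]
    (smul : X → A → X)
    (ip : X → X → A)
    (h_add : ∀ x y z : X, ip x (y + z) = ip x y + ip x z)
    (h_add' : ∀ x y z : X, ip (x + y) z = ip x z + ip y z)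
    (h_smul : ∀ (x y : X) (a : A), ip x (smul y a) = ip x y * a)
    (h_rsmul : ∀ (c : ℝ) (x y : X), ip x (c • y) = c • ip x y)
    (h_rsmul' : ∀ (c : ℝ) (x y : X), ip (c • x) y = c • ip x y)
    (h_star : ∀ x y : X, star (ip x y) = ip y x)
    (h_pos : ∀ x : X, 0 ≤ ip x x)
    (h_norm : ∀ x : X, ‖x‖ = Real.sqrt ‖ip x x‖)
    (x₀ y₀ : X) (n : ℕ)
    (f : Fin n → A → X) (f' : Fin n → A →L[ℝ] X) (p : A)
    (hf : ∀ i, HasFDerivAt (f i) (f' i) p)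
    (hfop : ∀ b : A,
      Real.sqrt ‖∑ i, ip (f' i b - smul ((2⁻¹ : ℝ) • (x₀ + y₀)) b)
                       (f' i b - smul ((2⁻¹ : ℝ) • (x₀ + y₀)) b)‖
        ≤ ‖(2⁻¹ : ℝ) • (x₀ - y₀)‖ * ‖b‖) :
    ∀ a : A,
      ‖(∑ k : Fin n, (((k : ℝ) + 1) ^ 2) • (f' k a))
          - ((((n : ℝ) + 1) * (2 * (n : ℝ) + 1)) / 6) • ∑ k : Fin n, (f' k a)‖
        ≤ ‖a‖ * ‖x₀ - y₀‖ * (n : ℝ) / (12 * Real.sqrt 5) *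
            Real.sqrt (((n : ℝ) - 1) * ((n : ℝ) + 1) * (2 * (n : ℝ) + 1)
              * (8 * (n : ℝ) + 11)) := by
  intro a
  classical
  set m : ℝ := (((n : ℝ) + 1) * (2 * (n : ℝ) + 1)) / 6 with hm
  set c : Fin n → ℝ := fun k => ((k : ℝ) + 1) ^ 2 - m with hc
  set u : X := smul ((2⁻¹ : ℝ) • (x₀ + y₀)) a with hu
  set v : Fin n → X := fun i => f' i a - u with hv
  set S : X := ∑ i, c i • v i with hS
  set T : A := ∑ i, ip (v i) (v i) with hT
  set C : ℝ := ∑ i, (c i) ^ 2 with hC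
  -- bilinearity packaging
  have ipsuml : ∀ (g : Fin n → X) (y : X), ip (∑ i, g i) y = ∑ i, ip (g i) y := fun g y =>
    map_sum (AddMonoidHom.mk' (fun x => ip x y) (fun pp qq => h_add' pp qq y)) g Finset.univ
  have ipsumr : ∀ (x : X) (g : Fin n → X), ip x (∑ i, g i) = ∑ i, ip x (g i) := fun x g =>
    map_sum (AddMonoidHom.mk' (fun y => ip x y) (fun pp qq => h_add x pp qq)) g Finset.univ
  have ipsubl : ∀ pp qq y : X, ip (pp - qq) y = ip pp y - ip qq y := fun pp qq y =>
    map_sub (AddMonoidHom.mk' (fun x => ip x y) (fun aa bb => h_add' aa bb y)) pp qq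
  have ipsubr : ∀ x pp qq : X, ip x (pp - qq) = ip x pp - ip x qq := fun x pp qq =>
    map_sub (AddMonoidHom.mk' (fun y => ip x y) (fun aa bb => h_add x aa bb)) pp qq
  have hip2 : ∀ (r t : ℝ) (x y : X), ip (r • x) (t • y) = (r * t) • ip x y := fun r t x y => by
    rw [h_rsmul', h_rsmul, smul_smul]
  have hSS : ip S S = ∑ i, ∑ j, (c i * c j) • ip (v i) (v j) := by
    rw [hS, ipsuml]
    refine Finset.sum_congr rfl fun i _ => ?_
    rw [ipsumr]
    exact Finset.sum_congr rfl fun j _ => hip2 (c i) (c j) (v i) (v j)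
  set w : Fin n → Fin n → X := fun i j => (Real.sqrt 2)⁻¹ • (c j • v i - c i • v j) with hwdef
  have hr2 : (Real.sqrt 2)⁻¹ * (Real.sqrt 2)⁻¹ = (2⁻¹ : ℝ) := by
    rw [← mul_inv, Real.mul_self_sqrt (by norm_num)]
  have hw : ∀ i j, ip (w i j) (w i j)
      = (2⁻¹ * (c j * c j)) • ip (v i) (v i) + (2⁻¹ * (c i * c i)) • ip (v j) (v j)
        - (2⁻¹ * (c i * c j)) • ip (v i) (v j) - (2⁻¹ * (c i * c j)) • ip (v j) (v i) := by
    intro i j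
    have e1 : ip (w i j) (w i j)
        = (2⁻¹ : ℝ) • ip (c j • v i - c i • v j) (c j • v i - c i • v j) := by
      rw [hwdef]
      rw [h_rsmul', h_rsmul, smul_smul, hr2]
    rw [e1, ipsubl, ipsubr, ipsubr, hip2, hip2, hip2, hip2]
    module
  have hD : (0 : A) ≤ ∑ i, ∑ j, ip (w i j) (w i j) :=
    Finset.sum_nonneg fun i _ => Finset.sum_nonneg fun j _ => h_pos _
  have h1 : ∑ i, ∑ j, (2⁻¹ * (c j * c j)) • ip (v i) (v i) = (2⁻¹ * C) • T := by
    calc ∑ i, ∑ j, (2⁻¹ * (c j * c j)) • ip (v i) (v i)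
        = ∑ i, (∑ j, 2⁻¹ * (c j * c j)) • ip (v i) (v i) := by
          exact Finset.sum_congr rfl fun i _ => by rw [Finset.sum_smul]
      _ = ∑ i, (2⁻¹ * C) • ip (v i) (v i) := by
          refine Finset.sum_congr rfl fun i _ => ?_
          congr 1
          rw [hC, Finset.mul_sum]
          exact Finset.sum_congr rfl fun j _ => by rw [sq]
      _ = (2⁻¹ * C) • T := by rw [hT, Finset.smul_sum]
  have h2 : ∑ i, ∑ j, (2⁻¹ * (c i * c i)) • ip (v j) (v j) = (2⁻¹ * C) • T := by
    rw [Finset.sum_comm]; exact h1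
  have h3 : ∑ i, ∑ j, (2⁻¹ * (c i * c j)) • ip (v i) (v j) = (2⁻¹ : ℝ) • ip S S := by
    rw [hSS, Finset.smul_sum]
    refine Finset.sum_congr rfl fun i _ => ?_
    rw [Finset.smul_sum]
    exact Finset.sum_congr rfl fun j _ => by rw [smul_smul]
  have h4 : ∑ i, ∑ j, (2⁻¹ * (c i * c j)) • ip (v j) (v i) = (2⁻¹ : ℝ) • ip S S := by
    calc ∑ i, ∑ j, (2⁻¹ * (c i * c j)) • ip (v j) (v i)
        = ∑ j, ∑ i, (2⁻¹ * (c i * c j)) • ip (v j) (v i) := Finset.sum_comm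
      _ = ∑ j, ∑ i, (2⁻¹ * (c j * c i)) • ip (v j) (v i) := by
          exact Finset.sum_congr rfl fun j _ => Finset.sum_congr rfl fun i _ => by
            rw [mul_comm (c i) (c j)]
      _ = (2⁻¹ : ℝ) • ip S S := h3
  have hExp : ∑ i, ∑ j, ip (w i j) (w i j) = C • T - ip S S := by
    calc ∑ i, ∑ j, ip (w i j) (w i j)
        = ∑ i, ∑ j, ((2⁻¹ * (c j * c j)) • ip (v i) (v i) + (2⁻¹ * (c i * c i)) • ip (v j) (v j)
            - (2⁻¹ * (c i * c j)) • ip (v i) (v j) - (2⁻¹ * (c i * c j)) • ip (v j) (v i)) :=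
          Finset.sum_congr rfl fun i _ => Finset.sum_congr rfl fun j _ => hw i j
      _ = ((∑ i, ∑ j, (2⁻¹ * (c j * c j)) • ip (v i) (v i))
            + ∑ i, ∑ j, (2⁻¹ * (c i * c i)) • ip (v j) (v j))
            - (∑ i, ∑ j, (2⁻¹ * (c i * c j)) • ip (v i) (v j))
            - (∑ i, ∑ j, (2⁻¹ * (c i * c j)) • ip (v j) (v i)) := by
          simp only [Finset.sum_sub_distrib, Finset.sum_add_distrib]
      _ = ((2⁻¹ * C) • T + (2⁻¹ * C) • T) - (2⁻¹ : ℝ) • ip S S - (2⁻¹ : ℝ) • ip S S := by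
          rw [h1, h2, h3, h4]
      _ = C • T - ip S S := by module
  have hkey : ip S S ≤ C • T := by
    rw [hExp] at hD
    exact sub_nonneg.mp hD
  have hC0 : (0 : ℝ) ≤ C := by
    rw [hC]; exact Finset.sum_nonneg fun i _ => sq_nonneg _
  have hP0 : (0 : A) ≤ ip S S := h_pos S
  have hn1 : ‖ip S S‖ ≤ C * ‖T‖ := by
    have h := aux_norm_mono hP0 hkey
    rwa [norm_smul, Real.norm_eq_abs, abs_of_nonneg hC0] at h
  have hTn : Real.sqrt ‖T‖ ≤ ‖(2⁻¹ : ℝ) • (x₀ - y₀)‖ * ‖a‖ := by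
    have h := hfop a
    have hTeq : T = ∑ i, ip (f' i a - smul ((2⁻¹ : ℝ) • (x₀ + y₀)) a)
        (f' i a - smul ((2⁻¹ : ℝ) • (x₀ + y₀)) a) := by
      rw [hT]
    rw [hTeq]; exact h
  have hSn : ‖S‖ ≤ Real.sqrt C * (‖(2⁻¹ : ℝ) • (x₀ - y₀)‖ * ‖a‖) := by
    rw [h_norm S]
    calc Real.sqrt ‖ip S S‖ ≤ Real.sqrt (C * ‖T‖) := Real.sqrt_le_sqrt hn1
      _ = Real.sqrt C * Real.sqrt ‖T‖ := Real.sqrt_mul hC0 _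
      _ ≤ Real.sqrt C * (‖(2⁻¹ : ℝ) • (x₀ - y₀)‖ * ‖a‖) :=
          mul_le_mul_of_nonneg_left hTn (Real.sqrt_nonneg _)
  have hc0 : ∑ k : Fin n, c k = 0 := by
    simp only [hc]
    rw [Finset.sum_sub_distrib, Finset.sum_const, Finset.card_univ, Fintype.card_fin,
      aux_sumsq, nsmul_eq_mul, hm]
    ring
  have hgoalEq : (∑ k : Fin n, (((k : ℝ) + 1) ^ 2) • (f' k a)) - m • ∑ k : Fin n, (f' k a)
      = S := by
    calc (∑ k : Fin n, (((k : ℝ) + 1) ^ 2) • (f' k a)) - m • ∑ k : Fin n, (f' k a)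
        = ∑ k : Fin n, ((((k : ℝ) + 1) ^ 2) • (f' k a) - m • f' k a) := by
          rw [Finset.sum_sub_distrib, Finset.smul_sum]
      _ = ∑ k : Fin n, c k • (f' k a) := by
          refine Finset.sum_congr rfl fun k _ => ?_
          rw [hc, sub_smul]
      _ = ∑ k, (c k • v k + c k • u) := by
          refine Finset.sum_congr rfl fun k _ => ?_
          rw [hv]
          rw [← smul_add, sub_add_cancel]
      _ = (∑ k, c k • v k) + (∑ k, c k) • u := by
          rw [Finset.sum_add_distrib, Finset.sum_smul]
      _ = ∑ k, c k • v k := by rw [hc0, zero_smul, add_zero]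
      _ = S := hS.symm
  rw [hgoalEq]
  have hnormhalf : ‖(2⁻¹ : ℝ) • (x₀ - y₀)‖ = 2⁻¹ * ‖x₀ - y₀‖ := by
    rw [norm_smul, Real.norm_eq_abs]; norm_num
  have hCval : C = (n : ℝ) * (((n : ℝ) - 1) * ((n : ℝ) + 1) * (2 * (n : ℝ) + 1)
      * (8 * (n : ℝ) + 11)) / 180 := by
    rw [hC]
    have hck : ∀ k : Fin n, (c k) ^ 2
        = (((k : ℝ) + 1) ^ 2) ^ 2 - 2 * m * ((k : ℝ) + 1) ^ 2 + m ^ 2 := fun k => by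
      rw [hc]; ring
    rw [Finset.sum_congr rfl fun k _ => hck k]
    rw [Finset.sum_add_distrib, Finset.sum_sub_distrib, Finset.sum_const, Finset.card_univ,
      Fintype.card_fin, aux_sum4]
    have e2 : ∑ k : Fin n, 2 * m * ((k : ℝ) + 1) ^ 2
        = 2 * m * ((n : ℝ) * ((n : ℝ) + 1) * (2 * (n : ℝ) + 1) / 6) := by
      rw [← Finset.mul_sum, aux_sumsq]
    rw [e2, nsmul_eq_mul, hm]
    ring
  set R : ℝ := ((n : ℝ) - 1) * ((n : ℝ) + 1) * (2 * (n : ℝ) + 1) * (8 * (n : ℝ) + 11) with hR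
  clear_value m c u v S T C w R
  have final : Real.sqrt C * (‖(2⁻¹ : ℝ) • (x₀ - y₀)‖ * ‖a‖)
      ≤ ‖a‖ * ‖x₀ - y₀‖ * (n : ℝ) / (12 * Real.sqrt 5) * Real.sqrt R := by
    rw [hnormhalf]
    rcases Nat.eq_zero_or_pos n with hn | hn
    · have hCz : C = 0 := by rw [hCval, hn]; norm_num
      rw [hCz, hn]
      simp
    · have hn1' : (1 : ℝ) ≤ (n : ℝ) := by exact_mod_cast hn
      have hR0 : (0 : ℝ) ≤ R := by
        rw [hR]
        apply mul_nonneg (mul_nonneg (mul_nonneg (by linarith) (by linarith)) (by linarith))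
        linarith
      have hsq : Real.sqrt ((n : ℝ) ^ 2 * R / 180)
          = (n : ℝ) * Real.sqrt R / (6 * Real.sqrt 5) := by
        rw [show (n : ℝ) ^ 2 * R / 180 = ((n : ℝ) * Real.sqrt R / (6 * Real.sqrt 5)) ^ 2 by
          rw [div_pow, mul_pow, mul_pow, Real.sq_sqrt hR0,
            Real.sq_sqrt (by norm_num : (0:ℝ) ≤ 5)]
          norm_num]
        exact Real.sqrt_sq (by positivity)
      have hle : Real.sqrt C ≤ (n : ℝ) * Real.sqrt R / (6 * Real.sqrt 5) := by
        rw [← hsq, hCval]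
        apply Real.sqrt_le_sqrt
        have h5 : (0 : ℝ) ≤ ((n : ℝ) ^ 2 - (n : ℝ)) * R := by
          apply mul_nonneg _ hR0
          nlinarith
        have h6 : ((n : ℝ) ^ 2 - (n : ℝ)) * R = (n : ℝ) ^ 2 * R - (n : ℝ) * R := by ring
        linarith
      calc Real.sqrt C * (2⁻¹ * ‖x₀ - y₀‖ * ‖a‖)
          ≤ (n : ℝ) * Real.sqrt R / (6 * Real.sqrt 5) * (2⁻¹ * ‖x₀ - y₀‖ * ‖a‖) := by
            apply mul_le_mul_of_nonneg_right hle (by positivity)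
        _ = ‖a‖ * ‖x₀ - y₀‖ * (n : ℝ) / (12 * Real.sqrt 5) * Real.sqrt R := by
            ring
  exact hSn.trans final
end

section
/- Let H be an inner product space over 𝕂 ∈ {ℝ,ℂ}, x₁,…,xₙ ∈ H, α₁,…,αₙ ∈ 𝕂, and (p₁,…,pₙ) a probability vector. If x, X ∈ H satisfy Re⟨X − xᵢ, xᵢ − x⟩ ≥ 0 for all i (equivalently ‖xᵢ − (x+X)/2‖ ≤ (1/2)‖X − x‖), then ‖Σᵢ pᵢαᵢxᵢ − (Σᵢ pᵢαᵢ)(Σᵢ pᵢxᵢ)‖ ≤ (1/2)‖X−x‖ Σᵢ pᵢ|αᵢ − Σⱼ pⱼαⱼ| ≤ (1/2)‖X−x‖ (Σᵢ pᵢ|αᵢ|² − |Σᵢ pᵢαᵢ|²)^{1/2}. -/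
/-!
Put `c = (x + X) / 2`. Expanding `‖a + b‖² - ‖a - b‖² = 4 Re⟪a, b⟫` with `a = X - xᵢ`, `b = xᵢ - x`
turns the hypothesis into `‖xᵢ - c‖ ≤ ‖X - x‖ / 2`. Since the weights sum to one, the quantity to
bound equals `Σᵢ pᵢ (αᵢ - A)(xᵢ - c)` with `A = Σⱼ pⱼαⱼ`, whence the first inequality by the
triangle inequality. The second is Cauchy–Schwarz for the weights together with the variance
identity `Σᵢ pᵢ|αᵢ - A|² = Σᵢ pᵢ|αᵢ|² - |A|²`.
-/

open Finset RCLike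

section InnerProductSpace

variable {𝕂 E : Type*} [RCLike 𝕂] [NormedAddCommGroup E] [InnerProductSpace 𝕂 E]

theorem norm_sub_le_norm_add_of_re_inner_nonneg {a b : E} (h : 0 ≤ re (inner 𝕂 a b)) :
    ‖a - b‖ ≤ ‖a + b‖ := by
  have hsq : ‖a - b‖ ^ 2 ≤ ‖a + b‖ ^ 2 := by
    rw [norm_sub_sq (𝕜 := 𝕂), norm_add_sq (𝕜 := 𝕂)]
    linarith
  exact pow_le_pow_iff_left₀ (norm_nonneg _) (norm_nonneg _) two_ne_zero |>.mp hsq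

theorem norm_sub_midpoint_le_of_re_inner_nonneg {x X y : E}
    (h : 0 ≤ re (inner 𝕂 (X - y) (y - x))) :
    ‖y - (2 : 𝕂)⁻¹ • (x + X)‖ ≤ ‖X - x‖ / 2 := by
  have hdiff : (X - y) - (y - x) = (2 : 𝕂) • ((2 : 𝕂)⁻¹ • (x + X) - y) := by module
  have hsum : (X - y) + (y - x) = X - x := by abel
  have := norm_sub_le_norm_add_of_re_inner_nonneg h
  rw [hdiff, hsum, norm_smul, RCLike.norm_ofNat, norm_sub_rev] at this
  linarith

theorem sum_mul_norm_sub_mean_sq {ι : Type*} [Fintype ι] (p : ι → ℝ) (hp1 : ∑ i, p i = 1)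
    (v : ι → E) :
    ∑ i, p i * ‖v i - ∑ j, (p j : 𝕂) • v j‖ ^ 2
      = ∑ i, p i * ‖v i‖ ^ 2 - ‖∑ j, (p j : 𝕂) • v j‖ ^ 2 := by
  set m := ∑ j, (p j : 𝕂) • v j
  have hcross : ∑ i, p i * re (inner 𝕂 (v i) m) = ‖m‖ ^ 2 := by
    rw [← inner_self_eq_norm_sq (𝕜 := 𝕂), sum_inner, map_sum]
    simp only [inner_smul_real_left, real_smul_eq_coe_mul, re_ofReal_mul]
  simp only [norm_sub_sq (𝕜 := 𝕂), mul_add, mul_sub, sum_add_distrib, sum_sub_distrib,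
    ← sum_mul, hp1, mul_left_comm (p _) 2, ← mul_sum, hcross]
  ring

end InnerProductSpace

theorem sum_smul_smul_sub_mean_smul_sum {ι R E : Type*} [Fintype ι] [CommRing R]
    [AddCommGroup E] [Module R E] (w : ι → R) (hw : ∑ i, w i = 1) (α : ι → R) (v : ι → E)
    (c : E) :
    ∑ i, w i • α i • v i - (∑ i, w i * α i) • ∑ i, w i • v i
      = ∑ i, w i • (α i - ∑ j, w j * α j) • (v i - c) := by
  set A := ∑ j, w j * α j
  have hcentred : ∑ i, w i * (α i - A) = 0 := by
    simp only [mul_sub, sum_sub_distrib, ← sum_mul, hw, one_mul, A, sub_self]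
  have hterm : ∀ i, w i • (α i - A) • (v i - c)
      = w i • α i • v i - A • w i • v i - (w i * (α i - A)) • c := fun i => by module
  simp only [hterm, sum_sub_distrib, ← smul_sum, ← sum_smul, hcentred, zero_smul, sub_zero]

theorem sum_mul_le_sqrt_sum_mul_sq {ι : Type*} [Fintype ι] (p : ι → ℝ) (hp : ∀ i, 0 ≤ p i)
    (hp1 : ∑ i, p i = 1) (f : ι → ℝ) :
    ∑ i, p i * f i ≤ √(∑ i, p i * f i ^ 2) := by
  have hCS : (∑ i, p i * f i) ^ 2 ≤ (∑ i, p i) * ∑ i, p i * f i ^ 2 :=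
    sum_sq_le_sum_mul_sum_of_sq_le_mul _ (fun i _ => hp i)
      (fun i _ => mul_nonneg (hp i) (sq_nonneg _)) (fun i _ => le_of_eq (by ring))
  rw [hp1, one_mul] at hCS
  exact (le_abs_self _).trans (Real.abs_le_sqrt hCS)

theorem norm_sum_smul_smul_sub_mean_smul_sum_le {𝕂 E ι : Type*} [RCLike 𝕂]
    [NormedAddCommGroup E] [NormedSpace 𝕂 E] [Fintype ι] (p : ι → ℝ) (hp : ∀ i, 0 ≤ p i)
    (hp1 : ∑ i, p i = 1) (α : ι → 𝕂) (v : ι → E) (c : E) (r : ℝ)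
    (hr : ∀ i, ‖v i - c‖ ≤ r) :
    ‖∑ i, (p i : 𝕂) • α i • v i - (∑ i, (p i : 𝕂) * α i) • ∑ i, (p i : 𝕂) • v i‖
      ≤ r * ∑ i, p i * ‖α i - ∑ j, (p j : 𝕂) * α j‖ := by
  have hw : ∑ i, (p i : 𝕂) = 1 := by rw [← ofReal_sum, hp1, ofReal_one]
  rw [sum_smul_smul_sub_mean_smul_sum _ hw α v c, mul_sum]
  refine (norm_sum_le _ _).trans (sum_le_sum fun i _ => ?_)
  rw [norm_smul, norm_smul, norm_ofReal, abs_of_nonneg (hp i), ← mul_assoc, mul_comm r]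
  exact mul_le_mul_of_nonneg_left (hr i) (mul_nonneg (hp i) (norm_nonneg _))

/-- Grüss type inequality in an inner product space H over 𝕂 ∈ {ℝ,ℂ}: if the xᵢ satisfy
Re⟨X − xᵢ, xᵢ − x⟩ ≥ 0 for all i, then
‖Σᵢ pᵢαᵢxᵢ − (Σᵢ pᵢαᵢ)(Σᵢ pᵢxᵢ)‖ ≤ (1/2)‖X−x‖ Σᵢ pᵢ|αᵢ − Σⱼ pⱼαⱼ|
  ≤ (1/2)‖X−x‖ (Σᵢ pᵢ|αᵢ|² − |Σᵢ pᵢαᵢ|²)^{1/2}. -/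
theorem stmt_15 {𝕂 : Type*} [RCLike 𝕂] {H : Type*} [NormedAddCommGroup H]
    [InnerProductSpace 𝕂 H]
    (n : ℕ) (xv : Fin n → H) (α : Fin n → 𝕂)
    (p : Fin n → ℝ) (hp : ∀ i, 0 ≤ p i) (hp1 : ∑ i, p i = 1)
    (x X : H)
    (h : ∀ i, 0 ≤ RCLike.re (inner 𝕂 (X - xv i) (xv i - x) : 𝕂)) :
    ‖(∑ i, (p i : 𝕂) • (α i • xv i)) - (∑ i, (p i : 𝕂) * α i) • ∑ i, (p i : 𝕂) • xv i‖
      ≤ (1 / 2) * ‖X - x‖ * ∑ i, p i * ‖α i - ∑ j, (p j : 𝕂) * α j‖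
    ∧ (1 / 2) * ‖X - x‖ * ∑ i, p i * ‖α i - ∑ j, (p j : 𝕂) * α j‖
      ≤ (1 / 2) * ‖X - x‖ *
          Real.sqrt ((∑ i, p i * ‖α i‖ ^ 2) - ‖∑ i, (p i : 𝕂) * α i‖ ^ 2) := by
  have hradius i : ‖xv i - (2 : 𝕂)⁻¹ • (x + X)‖ ≤ 1 / 2 * ‖X - x‖ := by
    rw [one_div_mul_eq_div]
    exact norm_sub_midpoint_le_of_re_inner_nonneg (h i)
  refine ⟨norm_sum_smul_smul_sub_mean_smul_sum_le p hp hp1 α xv _ _ hradius, ?_⟩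
  gcongr
  have hvar := sum_mul_norm_sub_mean_sq (𝕂 := 𝕂) p hp1 α
  simp only [smul_eq_mul] at hvar
  exact hvar ▸ sum_mul_le_sqrt_sum_mul_sq p hp hp1 _
end
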